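/- Define s_n in ℚ(x_1,x_2) by s_n = x_1^{-n} x_2^{-n} Σ_{q+r ≤ n} C(n-r, q) C(n-q, r) x_1^{2q} x_2^{2r}, and let z_1 = (x_1^2 + x_2^2 + 1)/(x_1 x_2). Then with s_0 = 1, the recursion s_{n+1} = z_1 s_n − s_{n-1} holds for all n ≥ 1. -/

import Mathlib

noncomputable section

/-- The ambient field `ℚ(x₁, x₂)` of rational functions in two variables. -/
abbrev Kfield : Type := FractionRing (MvPolynomial (Fin 2) ℚ)

/-- The first indeterminate `x₁`. -/
def X1 : Kfield := algebraMap (MvPolynomial (Fin 2) ℚ) Kfield (MvPolynomial.X 0)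

/-- The second indeterminate `x₂`. -/
def X2 : Kfield := algebraMap (MvPolynomial (Fin 2) ℚ) Kfield (MvPolynomial.X 1)

lemma X1_ne_zero : X1 ≠ 0 := by
  rw [X1, ← map_zero (algebraMap (MvPolynomial (Fin 2) ℚ) Kfield)]
  intro h
  exact MvPolynomial.X_ne_zero 0 (IsFractionRing.injective _ _ h)

lemma X2_ne_zero : X2 ≠ 0 := by
  rw [X2, ← map_zero (algebraMap (MvPolynomial (Fin 2) ℚ) Kfield)]
  intro h
  exact MvPolynomial.X_ne_zero 1 (IsFractionRing.injective _ _ h)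

/-- coefficient -/
def cc (n q r : ℕ) : ℕ := (n - r).choose q * (n - q).choose r

lemma cc_eq_zero {n q r : ℕ} (h : n < q + r) : cc n q r = 0 := by
  unfold cc
  rcases Nat.lt_or_ge n r with h1 | h1
  · rcases Nat.eq_zero_or_pos q with rfl | hq
    · simp [Nat.choose_eq_zero_of_lt h1]
    · have h2 : n - r = 0 := by omega
      rw [h2, Nat.choose_eq_zero_of_lt hq, zero_mul]
  · have h2 : n - r < q := by omega
    rw [Nat.choose_eq_zero_of_lt h2, zero_mul]

lemma cc_key (n q r : ℕ) :
    cc (n+2) q r + (if q = 0 then 0 else if r = 0 then 0 else cc n (q-1) (r-1))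
      = (if q = 0 then 0 else cc (n+1) (q-1) r)
        + (if r = 0 then 0 else cc (n+1) q (r-1)) + cc (n+1) q r := by
  match q, r with
  | 0, 0 => simp [cc]
  | 0, s+1 =>
      simp only [if_pos rfl, if_neg (Nat.succ_ne_zero s)]
      unfold cc
      have h1 : n + 2 - (s+1) = n + 1 - s := by omega
      have h2 : n + 1 - (s+1) = n - s := by omega
      rw [h1, h2]
      simp [Nat.choose_succ_succ (n+1) s]
  | p+1, 0 =>
      simp only [if_pos rfl, if_neg (Nat.succ_ne_zero p)]
      unfold cc
      have h1 : n + 2 - (p+1) = n + 1 - p := by omega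
      have h2 : n + 1 - (p+1) = n - p := by omega
      rw [h1, h2]
      simp [Nat.choose_succ_succ (n+1) p]
  | p+1, s+1 =>
      simp only [if_neg (Nat.succ_ne_zero p), if_neg (Nat.succ_ne_zero s), Nat.add_sub_cancel]
      rcases Nat.lt_or_ge n s with hs | hs
      · rw [cc_eq_zero (show n + 2 < (p+1) + (s+1) by omega),
          cc_eq_zero (show n < p + s by omega),
          cc_eq_zero (show n + 1 < p + (s+1) by omega),
          cc_eq_zero (show n + 1 < (p+1) + s by omega),
          cc_eq_zero (show n + 1 < (p+1) + (s+1) by omega)]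
      rcases Nat.lt_or_ge n p with hp | hp
      · rw [cc_eq_zero (show n + 2 < (p+1) + (s+1) by omega),
          cc_eq_zero (show n < p + s by omega),
          cc_eq_zero (show n + 1 < p + (s+1) by omega),
          cc_eq_zero (show n + 1 < (p+1) + s by omega),
          cc_eq_zero (show n + 1 < (p+1) + (s+1) by omega)]
      unfold cc
      have e1 : n + 2 - (s+1) = (n - s) + 1 := by omega
      have e2 : n + 2 - (p+1) = (n - p) + 1 := by omega
      have e3 : n + 1 - (s+1) = n - s := by omega
      have e4 : n + 1 - (p+1) = n - p := by omega
      have e5 : n + 1 - s = (n - s) + 1 := by omega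
      have e6 : n + 1 - p = (n - p) + 1 := by omega
      rw [e1, e2, e3, e4, e5, e6]
      rw [Nat.choose_succ_succ (n - s) p, Nat.choose_succ_succ (n - p) s]
      ring

/-- square double sum in factored form -/
def D (M : ℕ) (f : ℕ → ℕ → ℕ) : Kfield :=
  ∑ q ∈ Finset.range M, (∑ r ∈ Finset.range M, (f q r : Kfield) * (X2^2)^r) * (X1^2)^q

lemma D_congr {M : ℕ} {f g : ℕ → ℕ → ℕ} (h : ∀ q r, f q r = g q r) : D M f = D M g := by
  unfold D
  exact Finset.sum_congr rfl fun q _ => by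
    congr 1
    exact Finset.sum_congr rfl fun r _ => by rw [h]

lemma D_add (M : ℕ) (f g : ℕ → ℕ → ℕ) :
    D M f + D M g = D M (fun q r => f q r + g q r) := by
  unfold D
  rw [← Finset.sum_add_distrib]
  refine Finset.sum_congr rfl fun q _ => ?_
  rw [← add_mul, ← Finset.sum_add_distrib]
  congr 1
  refine Finset.sum_congr rfl fun r _ => ?_
  push_cast
  ring

lemma shift1 (M : ℕ) (u : Kfield) (c : ℕ → Kfield) (hc : c M = 0) :
    u * (∑ r ∈ Finset.range (M+1), c r * u ^ r)
      = ∑ r ∈ Finset.range (M+1), (if r = 0 then 0 else c (r-1)) * u ^ r := by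
  rw [Finset.sum_range_succ' (fun r => (if r = 0 then 0 else c (r-1)) * u ^ r) M]
  rw [Finset.sum_range_succ (fun r => c r * u ^ r) M, hc]
  simp only [Nat.succ_ne_zero, ite_false, ite_true, Nat.add_sub_cancel, zero_mul, mul_zero,
    add_zero, zero_add, pow_zero]
  rw [Finset.mul_sum]
  exact Finset.sum_congr rfl fun r _ => by ring

lemma shiftA (M : ℕ) (f : ℕ → ℕ → ℕ) (hf : ∀ r, f M r = 0) :
    X1^2 * D (M+1) f = D (M+1) (fun q r => if q = 0 then 0 else f (q-1) r) := by
  unfold D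
  rw [shift1 M (X1^2) (fun q => ∑ r ∈ Finset.range (M+1), (f q r : Kfield) * (X2^2)^r)
    (by simp [hf])]
  refine Finset.sum_congr rfl fun q _ => ?_
  congr 1
  split_ifs with h
  · simp [h]
  · exact Finset.sum_congr rfl fun r _ => by simp [h]

lemma shiftB (M : ℕ) (f : ℕ → ℕ → ℕ) (hf : ∀ q, f q M = 0) :
    X2^2 * D (M+1) f = D (M+1) (fun q r => if r = 0 then 0 else f q (r-1)) := by
  unfold D
  rw [Finset.mul_sum]
  refine Finset.sum_congr rfl fun q _ => ?_
  rw [← mul_assoc]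
  congr 1
  rw [shift1 M (X2^2) (fun r => (f q r : Kfield)) (by simp [hf])]
  refine Finset.sum_congr rfl fun r _ => ?_
  congr 1
  split_ifs with h <;> simp [h]

/-- the polynomial -/
def PP (n : ℕ) : Kfield :=
  ∑ q ∈ Finset.range (n + 1), ∑ r ∈ Finset.range (n + 1 - q),
    (cc n q r : Kfield) * X1 ^ (2 * q) * X2 ^ (2 * r)

lemma PP_eq_D (k M : ℕ) (h : k < M) : PP k = D M (cc k) := by
  unfold PP D
  have h1 : ∀ q, ∑ r ∈ Finset.range (k+1-q), (cc k q r : Kfield) * X1 ^ (2*q) * X2 ^ (2*r)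
      = (∑ r ∈ Finset.range (k+1-q), (cc k q r : Kfield) * (X2^2)^r) * (X1^2)^q := by
    intro q
    rw [Finset.sum_mul]
    exact Finset.sum_congr rfl fun r _ => by rw [pow_mul, pow_mul]; ring
  simp only [h1]
  have h2 : ∀ q ∈ Finset.range (k+1),
      (∑ r ∈ Finset.range (k+1-q), (cc k q r : Kfield) * (X2^2)^r) * (X1^2)^q
      = (∑ r ∈ Finset.range M, (cc k q r : Kfield) * (X2^2)^r) * (X1^2)^q := by
    intro q hq
    simp only [Finset.mem_range] at hq
    congr 1
    apply Finset.sum_subset (Finset.range_subset_range.2 (by omega))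
    intro r _ hr
    simp only [Finset.mem_range, not_lt] at hr
    rw [cc_eq_zero (show k < q + r by omega)]
    simp
  rw [Finset.sum_congr rfl h2]
  apply Finset.sum_subset (Finset.range_subset_range.2 (by omega))
  intro q _ hq
  simp only [Finset.mem_range, not_lt] at hq
  rw [Finset.sum_eq_zero, zero_mul]
  intro r _
  rw [cc_eq_zero (show k < q + r by omega)]
  simp

lemma PP_rec (n : ℕ) :
    PP (n+2) + (X1^2 * X2^2) * PP n = (X1^2 + X2^2 + 1) * PP (n+1) := by
  have e0 := PP_eq_D n (n+2+1) (by omega)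
  have e1 := PP_eq_D (n+1) (n+2+1) (by omega)
  have e2 := PP_eq_D (n+2) (n+2+1) (by omega)
  rw [e0, e1, e2]
  have hB := shiftB (n+2) (cc n) (fun q => cc_eq_zero (by omega))
  have hA := shiftA (n+2) (fun q r => if r = 0 then 0 else cc n q (r-1)) (fun r => by
    show (if r = 0 then 0 else cc n (n+2) (r-1)) = 0
    split_ifs with h
    · rfl
    · exact cc_eq_zero (by omega))
  have hA1 := shiftA (n+2) (cc (n+1)) (fun r => cc_eq_zero (by omega))
  have hB1 := shiftB (n+2) (cc (n+1)) (fun q => cc_eq_zero (by omega))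
  rw [mul_assoc, hB, hA, add_mul, add_mul, one_mul, hA1, hB1, D_add, D_add, D_add]
  exact D_congr fun q r => cc_key n q r

theorem stmt9 (s : ℕ → Kfield) (z1 : Kfield)
    (hs : ∀ n : ℕ, s n = X1 ^ (-(n : ℤ)) * X2 ^ (-(n : ℤ)) *
      ∑ q ∈ Finset.range (n + 1), ∑ r ∈ Finset.range (n + 1 - q),
        (((n - r).choose q * (n - q).choose r : ℕ) : Kfield) * X1 ^ (2 * q) * X2 ^ (2 * r))
    (hz : z1 = (X1 ^ 2 + X2 ^ 2 + 1) / (X1 * X2)) :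
    ∀ n : ℕ, 1 ≤ n → s (n + 1) = z1 * s n - s (n - 1) := by
  intro n hn
  obtain ⟨m, rfl⟩ : ∃ m, n = m + 1 := ⟨n - 1, by omega⟩
  set t : Kfield := (X1 * X2)⁻¹ with ht_def
  have ht : (X1 * X2) * t = 1 := mul_inv_cancel₀ (mul_ne_zero X1_ne_zero X2_ne_zero)
  have hsP : ∀ k : ℕ, s k = t ^ k * PP k := by
    intro k
    rw [hs k]
    unfold PP cc
    congr 1
    rw [zpow_neg, zpow_neg, zpow_natCast, zpow_natCast, ← mul_inv, ← mul_pow, ht_def, inv_pow]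
  simp only [Nat.add_sub_cancel]
  rw [hsP, hsP, hsP, hz, div_eq_mul_inv, ← ht_def]
  have hPr := PP_rec m
  linear_combination t^(m+2) * hPr - t^m * PP m * (1 + X1*X2*t) * ht
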